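/- arXiv:1301.6510 — 9 statements merged into one kernel-verified Lean document; each statement's English description precedes it below -/
import Mathlib

section
/- For every γ ∈ [0,1), every continuous function x : [0,∞) → ℝ satisfying x(t) = ∫₀^t sgn(x(s))·|x(s)|^γ ds for all t ≥ 0 is either identically zero or of the form x(t) = σ·H_γ(t − t₀) for some t₀ ≥ 0 and some σ ∈ {−1, 1}. -/
open MeasureTheory Filter Topology

/-- `Hgamma γ s = ((1-γ) · s⁺)^(1/(1-γ))`. -/
noncomputable def Hgamma (γ : ℝ) (s : ℝ) : ℝ := ((1 - γ) * max s 0) ^ (1 / (1 - γ))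

/-- `sgn x = 1` if `x > 0`, `-1` if `x < 0`, `0` if `x = 0`. -/
noncomputable def sgn (x : ℝ) : ℝ := if 0 < x then 1 else if x < 0 then -1 else 0

lemma sgn_neg' (v : ℝ) : sgn (-v) = -sgn v := by
  simp only [sgn]
  split_ifs <;> norm_num <;> linarith

lemma sgn_zero' : sgn 0 = 0 := by simp [sgn]

lemma measurable_sgn : Measurable sgn := by
  unfold sgn
  exact Measurable.ite measurableSet_Ioi measurable_const
    (Measurable.ite measurableSet_Iio measurable_const measurable_const)

/-- Integrability of the integrand on `[a,b] ⊆ [0,∞)`. -/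
lemma intInt (γ : ℝ) (hγ0 : 0 ≤ γ) (x : ℝ → ℝ) (hxc : ContinuousOn x (Set.Ici 0))
    {a b : ℝ} (ha : 0 ≤ a) (hab : a ≤ b) :
    IntervalIntegrable (fun s => sgn (x s) * |x s| ^ γ) volume a b := by
  rw [intervalIntegrable_iff_integrableOn_Ioc_of_le hab]
  have hIcc : Set.Icc a b ⊆ Set.Ici 0 := fun s hs => le_trans ha hs.1
  obtain ⟨M, hM⟩ := isCompact_Icc.exists_bound_of_continuousOn (hxc.mono hIcc)
  have hM0 : 0 ≤ M := le_trans (norm_nonneg _) (hM a ⟨le_refl a, hab⟩)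
  have hφ : Measurable (fun v : ℝ => sgn v * |v| ^ γ) :=
    measurable_sgn.mul ((continuous_abs.rpow_const (fun v => Or.inr hγ0)).measurable)
  have hxm : AEMeasurable x (volume.restrict (Set.Ioc a b)) :=
    (hxc.mono (Set.Ioc_subset_Icc_self.trans hIcc)).aemeasurable measurableSet_Ioc
  refine Integrable.mono' (g := fun _ => M ^ γ)
    (integrableOn_const (hs := measure_Ioc_lt_top.ne) (hC := enorm_ne_top))
    (hφ.comp_aemeasurable hxm).aestronglyMeasurable ?_
  filter_upwards [ae_restrict_mem measurableSet_Ioc] with s hs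
  have hxs : |x s| ≤ M := hM s (Set.Ioc_subset_Icc_self hs)
  have habs : |sgn (x s)| ≤ 1 := by simp only [sgn]; split_ifs <;> norm_num
  have hrn : (0:ℝ) ≤ |x s| ^ γ := Real.rpow_nonneg (abs_nonneg _) _
  calc ‖sgn (x s) * |x s| ^ γ‖ = ‖sgn (x s)‖ * ‖|x s| ^ γ‖ := norm_mul _ _
    _ = |sgn (x s)| * |x s| ^ γ := by
        rw [Real.norm_eq_abs, Real.norm_eq_abs, abs_of_nonneg hrn]
    _ ≤ 1 * M ^ γ := by
        exact mul_le_mul habs (Real.rpow_le_rpow (abs_nonneg _) hxs hγ0) hrn zero_le_one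
    _ = M ^ γ := one_mul _

/-- The negated solution is a solution. -/
lemma sol_neg (γ : ℝ) (x : ℝ → ℝ)
    (hsol : ∀ t : ℝ, 0 ≤ t → x t = ∫ s in (0:ℝ)..t, sgn (x s) * |x s| ^ γ) :
    ∀ t : ℝ, 0 ≤ t →
      (fun s => -x s) t = ∫ s in (0:ℝ)..t, sgn ((fun s => -x s) s) * |(fun s => -x s) s| ^ γ := by
  intro t ht
  simp only
  rw [hsol t ht, ← intervalIntegral.integral_neg]
  apply intervalIntegral.integral_congr
  intro s _
  simp [sgn_neg', abs_neg]

/-- Sign persistence: once positive, a solution stays positive. -/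
lemma pos_persist (γ : ℝ) (hγ : γ ∈ Set.Ico (0 : ℝ) 1) (x : ℝ → ℝ)
    (hxc : ContinuousOn x (Set.Ici 0))
    (hsol : ∀ t : ℝ, 0 ≤ t → x t = ∫ s in (0:ℝ)..t, sgn (x s) * |x s| ^ γ)
    {a b : ℝ} (ha : 0 ≤ a) (hab : a ≤ b) (hxa : 0 < x a) : 0 < x b := by
  by_contra hb
  push_neg at hb
  set S := {t | t ∈ Set.Icc a b ∧ x t ≤ 0} with hS
  have hIcc : Set.Icc a b ⊆ Set.Ici 0 := fun s hs => le_trans ha hs.1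
  have hSne : S.Nonempty := ⟨b, ⟨hab, le_refl b⟩, hb⟩
  have hScl : IsClosed S := by
    have : S = Set.Icc a b ∩ x ⁻¹' Set.Iic 0 := by
      ext t; simp [hS, Set.mem_Icc, and_comm]
    rw [this]
    exact (hxc.mono hIcc).preimage_isClosed_of_isClosed isClosed_Icc isClosed_Iic
  have hSbdd : BddBelow S := ⟨a, fun t ht => ht.1.1⟩
  set c := sInf S with hc
  have hcS : c ∈ S := hScl.csInf_mem hSne hSbdd
  have hac : a < c := by
    rcases lt_or_eq_of_le hcS.1.1 with h | h
    · exact h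
    · exact absurd hcS.2 (not_le.2 (h ▸ hxa))
  have hpos : ∀ t ∈ Set.Ico a c, 0 < x t := by
    intro t ht
    by_contra h
    push_neg at h
    have : t ∈ S := ⟨⟨ht.1, le_trans ht.2.le hcS.1.2⟩, h⟩
    exact absurd (csInf_le hSbdd this) (not_le.2 ht.2)
  have h0c : 0 ≤ c := le_trans ha hcS.1.1
  -- x c = 0
  have hxc0 : x c = 0 := by
    refine le_antisymm hcS.2 ?_
    have hcw : ContinuousWithinAt x (Set.Ioo a c) c :=
      (hxc c h0c).mono (fun s hs => le_trans ha hs.1.le)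
    haveI hne : (nhdsWithin c (Set.Ioo a c)).NeBot := right_nhdsWithin_Ioo_neBot hac
    refine ge_of_tendsto hcw ?_
    filter_upwards [self_mem_nhdsWithin] with s hs
    exact (hpos s ⟨hs.1.le, hs.2⟩).le
  -- integral identity
  have hint : x c - x a = ∫ s in a..c, sgn (x s) * |x s| ^ γ := by
    rw [hsol c h0c, hsol a ha]
    exact intervalIntegral.integral_interval_sub_left
      (intInt γ hγ.1 x hxc (le_refl 0) h0c) (intInt γ hγ.1 x hxc (le_refl 0) ha)
  have hnn : 0 ≤ ∫ s in a..c, sgn (x s) * |x s| ^ γ := by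
    apply intervalIntegral.integral_nonneg hac.le
    intro u hu
    rcases lt_or_eq_of_le hu.2 with h | h
    · have hx : 0 < x u := hpos u ⟨hu.1, h⟩
      have hsg : sgn (x u) = 1 := by simp [sgn, hx]
      rw [hsg, one_mul]
      exact Real.rpow_nonneg (abs_nonneg _) _
    · rw [h, hxc0, sgn_zero', zero_mul]
  have : 0 < x c := by linarith
  exact absurd hxc0 (ne_of_gt this)

/-- Key structure lemma for positive solutions. -/
lemma key (γ : ℝ) (hγ : γ ∈ Set.Ico (0 : ℝ) 1) (x : ℝ → ℝ)
    (hxc : ContinuousOn x (Set.Ici 0))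
    (hsol : ∀ t : ℝ, 0 ≤ t → x t = ∫ s in (0:ℝ)..t, sgn (x s) * |x s| ^ γ)
    {t₁ : ℝ} (ht₁ : 0 ≤ t₁) (hx1 : 0 < x t₁) :
    ∃ t₀ : ℝ, 0 ≤ t₀ ∧ ∀ t : ℝ, 0 ≤ t → x t = Hgamma γ (t - t₀) := by
  have hγ1 : 0 < 1 - γ := by linarith [hγ.2]
  have hγ1' : (1:ℝ) - γ ≠ 0 := ne_of_gt hγ1
  set f : ℝ → ℝ := fun s => sgn (x s) * |x s| ^ γ with hf
  set N := {t : ℝ | 0 ≤ t ∧ 0 < x t} with hN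
  have hNne : N.Nonempty := ⟨t₁, ht₁, hx1⟩
  have hNbdd : BddBelow N := ⟨0, fun t ht => ht.1⟩
  set t₀ := sInf N with ht₀
  have ht₀0 : 0 ≤ t₀ := le_csInf hNne fun t ht => ht.1
  have ht₀t₁ : t₀ ≤ t₁ := csInf_le hNbdd ⟨ht₁, hx1⟩
  -- zero before t₀
  have hzero : ∀ t : ℝ, 0 ≤ t → t < t₀ → x t = 0 := by
    intro t ht htlt
    have h1 : ¬0 < x t := fun h =>
      absurd (csInf_le hNbdd ⟨ht, h⟩) (not_le.2 htlt)
    have h2 : ¬x t < 0 := by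
      intro h
      have := pos_persist γ hγ (fun s => -x s) hxc.neg (sol_neg γ x hsol)
        ht (le_trans htlt.le ht₀t₁) (by simpa using h)
      linarith
    linarith [not_lt.1 h1, not_lt.1 h2]
  -- positive after t₀
  have hposafter : ∀ t : ℝ, t₀ < t → 0 < x t := by
    intro t ht
    obtain ⟨s, hsN, hst⟩ := exists_lt_of_csInf_lt hNne ht
    exact pos_persist γ hγ x hxc hsol hsN.1 hst.le hsN.2
  -- x t₀ = 0
  have hzero₀ : x t₀ = 0 := by
    rw [hsol t₀ ht₀0]
    have hae : ∀ᵐ s : ℝ ∂volume, s ∈ Set.uIoc 0 t₀ → f s = (0:ℝ) := by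
      have hsing : ∀ᵐ s : ℝ ∂volume, s ∉ ({t₀} : Set ℝ) :=
        measure_eq_zero_iff_ae_notMem.1 Real.volume_singleton
      filter_upwards [hsing] with s hs hmem
      rw [Set.uIoc_of_le ht₀0] at hmem
      have hslt : s < t₀ := lt_of_le_of_ne hmem.2 (by simpa using hs)
      have : x s = 0 := hzero s hmem.1.le hslt
      simp [hf, this, sgn_zero']
    calc ∫ s in (0:ℝ)..t₀, f s = ∫ _ in (0:ℝ)..t₀, (0:ℝ) :=
          intervalIntegral.integral_congr_ae hae
      _ = 0 := by simp
  -- x t = ∫_{t₀}^t x^γ for t ≥ t₀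
  set g : ℝ → ℝ := fun s => (x s) ^ γ with hg
  have hA : ∀ t : ℝ, t₀ ≤ t → x t = ∫ s in t₀..t, g s := by
    intro t ht
    have h0t : (0:ℝ) ≤ t := le_trans ht₀0 ht
    have hi1 : IntervalIntegrable f volume 0 t₀ := intInt γ hγ.1 x hxc (le_refl 0) ht₀0
    have hi2 : IntervalIntegrable f volume t₀ t := intInt γ hγ.1 x hxc ht₀0 ht
    have hsplit : (∫ s in (0:ℝ)..t, f s) = (∫ s in (0:ℝ)..t₀, f s) + ∫ s in t₀..t, f s :=
      (intervalIntegral.integral_add_adjacent_intervals hi1 hi2).symm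
    have hfirst : (∫ s in (0:ℝ)..t₀, f s) = 0 := by rw [← hsol t₀ ht₀0]; exact hzero₀
    have hsecond : (∫ s in t₀..t, f s) = ∫ s in t₀..t, g s := by
      apply intervalIntegral.integral_congr_ae
      apply Filter.Eventually.of_forall
      intro s hs
      rw [Set.uIoc_of_le ht] at hs
      have hxs : 0 < x s := hposafter s hs.1
      simp [hf, hg, sgn, hxs, abs_of_pos hxs]
    rw [hsol t h0t, hsplit, hfirst, hsecond, zero_add]
  -- integrability of g
  have hgint : ∀ t : ℝ, t₀ ≤ t → IntervalIntegrable g volume t₀ t := by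
    intro t ht
    rw [intervalIntegrable_iff_integrableOn_Ioc_of_le ht]
    have hfint : IntegrableOn f (Set.Ioc t₀ t) volume :=
      (intervalIntegrable_iff_integrableOn_Ioc_of_le ht).1 (intInt γ hγ.1 x hxc ht₀0 ht)
    refine hfint.congr_fun ?_ measurableSet_Ioc
    intro s hs
    have hxs : 0 < x s := hposafter s hs.1
    simp [hf, hg, sgn, hxs, abs_of_pos hxs]
  -- continuity of g
  have hgc : ContinuousOn g (Set.Ici 0) :=
    hxc.rpow_const fun s _ => Or.inr hγ.1
  -- derivative of x
  have hR : ∀ u : ℝ, t₀ < u → HasDerivAt x (g u) u := by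
    intro u hu
    have hu0 : (0:ℝ) < u := lt_of_le_of_lt ht₀0 hu
    have hF : HasDerivAt (fun v => ∫ s in t₀..v, g s) (g u) u := by
      refine intervalIntegral.integral_hasDerivAt_right (hgint u hu.le) ?_ ?_
      · exact (hgc.mono (Set.Ioi_subset_Ici (le_refl 0))).stronglyMeasurableAtFilter
          isOpen_Ioi u hu0
      · exact hgc.continuousAt (Ici_mem_nhds hu0)
    refine hF.congr_of_eventuallyEq ?_
    filter_upwards [Ioi_mem_nhds hu] with v hv
    exact hA v (le_of_lt hv)
  -- main formula for t > t₀
  have hform : ∀ T : ℝ, t₀ < T → x T = Hgamma γ (T - t₀) := by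
    intro T hT
    set ψ : ℝ → ℝ := fun u => (x u) ^ (1 - γ) - (1 - γ) * u with hψ
    have hψd : ∀ u ∈ Set.Ioo t₀ T, HasDerivAt ψ 0 u := by
      intro u hu
      have hxu : 0 < x u := hposafter u hu.1
      have hd1 : HasDerivAt (fun v => (x v) ^ (1 - γ))
          (g u * (1 - γ) * (x u) ^ (1 - γ - 1)) u :=
        (hR u hu.1).rpow_const (Or.inl (ne_of_gt hxu))
      have hval : g u * (1 - γ) * (x u) ^ (1 - γ - 1) = 1 - γ := by
        have h1 : (1:ℝ) - γ - 1 = -γ := by ring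
        rw [h1, hg]
        have : (x u) ^ γ * (x u) ^ (-γ) = 1 := by
          rw [← Real.rpow_add hxu]; simp
        calc (x u) ^ γ * (1 - γ) * (x u) ^ (-γ)
            = (1 - γ) * ((x u) ^ γ * (x u) ^ (-γ)) := by ring
          _ = 1 - γ := by rw [this, mul_one]
      have hd2 : HasDerivAt (fun v => (1 - γ) * v) (1 - γ) u := by
        simpa using (hasDerivAt_id u).const_mul (1 - γ)
      have := hd1.sub hd2
      rw [hval, sub_self] at this
      exact this
    have hIccsub : Set.Icc t₀ T ⊆ Set.Ici 0 := fun s hs => le_trans ht₀0 hs.1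
    have hψc : ContinuousOn ψ (Set.Icc t₀ T) := by
      apply ContinuousOn.sub
      · exact (hxc.mono hIccsub).rpow_const fun s _ => Or.inr hγ1.le
      · exact (continuous_const.mul continuous_id).continuousOn
    have hdiff : DifferentiableOn ℝ ψ (interior (Set.Icc t₀ T)) := by
      rw [interior_Icc]
      exact fun u hu => ((hψd u hu).differentiableAt).differentiableWithinAt
    have hderiv0 : ∀ u ∈ interior (Set.Icc t₀ T), deriv ψ u = 0 := by
      rw [interior_Icc]
      exact fun u hu => (hψd u hu).deriv
    have hmono : MonotoneOn ψ (Set.Icc t₀ T) :=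
      monotoneOn_of_deriv_nonneg (convex_Icc _ _) hψc hdiff
        (fun u hu => le_of_eq (hderiv0 u hu).symm)
    have hanti : AntitoneOn ψ (Set.Icc t₀ T) :=
      antitoneOn_of_deriv_nonpos (convex_Icc _ _) hψc hdiff
        (fun u hu => le_of_eq (hderiv0 u hu))
    have hmem0 : t₀ ∈ Set.Icc t₀ T := ⟨le_refl _, hT.le⟩
    have hmemT : T ∈ Set.Icc t₀ T := ⟨hT.le, le_refl _⟩
    have hψeq : ψ T = ψ t₀ :=
      le_antisymm (hanti hmem0 hmemT hT.le) (hmono hmem0 hmemT hT.le)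
    have hψt₀ : ψ t₀ = -((1 - γ) * t₀) := by
      rw [hψ]; simp only [hzero₀, Real.zero_rpow hγ1', zero_sub]
    have hpow : (x T) ^ (1 - γ) = (1 - γ) * (T - t₀) := by
      have h1 : (x T) ^ (1 - γ) - (1 - γ) * T = -((1 - γ) * t₀) := hψt₀ ▸ hψeq
      have h2 : (x T) ^ (1 - γ) = (1 - γ) * T - (1 - γ) * t₀ := by linarith
      rw [h2]; ring
    have hxT : 0 < x T := hposafter T hT
    have hxTval : x T = ((1 - γ) * (T - t₀)) ^ (1 / (1 - γ)) := by
      rw [← hpow, ← Real.rpow_mul hxT.le]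
      rw [mul_one_div, div_self hγ1', Real.rpow_one]
    rw [hxTval, Hgamma, max_eq_left (sub_nonneg.2 hT.le)]
  refine ⟨t₀, ht₀0, fun t ht => ?_⟩
  rcases le_or_gt t t₀ with h | h
  · have hx0 : x t = 0 := by
      rcases lt_or_eq_of_le h with h' | h'
      · exact hzero t ht h'
      · rw [h']; exact hzero₀
    rw [hx0, Hgamma, max_eq_right (sub_nonpos.2 h), mul_zero,
      Real.zero_rpow (one_div_ne_zero hγ1')]
  · exact hform t h

/-- For every `γ ∈ [0,1)`, every continuous solution on `[0,∞)` of
`x(t) = ∫₀^t sgn(x(s)) · |x(s)|^γ ds` is either identically zero or of the form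
`x(t) = σ · H_γ(t - t₀)` for some `t₀ ≥ 0` and `σ ∈ {-1,1}`. -/
theorem stmt1 (γ : ℝ) (hγ : γ ∈ Set.Ico (0 : ℝ) 1) (x : ℝ → ℝ)
    (hxc : ContinuousOn x (Set.Ici 0))
    (hsol : ∀ t : ℝ, 0 ≤ t → x t = ∫ s in (0:ℝ)..t, sgn (x s) * |x s| ^ γ) :
    (∀ t : ℝ, 0 ≤ t → x t = 0) ∨
    (∃ t₀ : ℝ, 0 ≤ t₀ ∧ ∃ σ : ℝ, (σ = -1 ∨ σ = 1) ∧
      ∀ t : ℝ, 0 ≤ t → x t = σ * Hgamma γ (t - t₀)) := by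
  by_cases hz : ∀ t : ℝ, 0 ≤ t → x t = 0
  · exact Or.inl hz
  · right
    push_neg at hz
    obtain ⟨t₁, ht₁, hne⟩ := hz
    rcases lt_trichotomy (x t₁) 0 with h | h | h
    · obtain ⟨t₀, ht₀0, hform⟩ := key γ hγ (fun s => -x s) hxc.neg (sol_neg γ x hsol)
        ht₁ (by simpa using h)
      refine ⟨t₀, ht₀0, -1, Or.inl rfl, fun t ht => ?_⟩
      have := hform t ht
      linarith
    · exact absurd h hne
    · obtain ⟨t₀, ht₀0, hform⟩ := key γ hγ x hxc hsol ht₁ h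
      exact ⟨t₀, ht₀0, 1, Or.inr rfl, fun t ht => by rw [hform t ht, one_mul]⟩
end

section
/- (Comparison lemma, lower bound.) Let γ ∈ [0,1), 0 ≤ t̄ ≤ T, δ > 0, and let f : [t̄, T] → ℝ be a nonnegative continuous function such that f(t) ≥ δ + ∫_{t̄}^t f(s)^γ ds for all t ∈ [t̄, T]. Then f(t) ≥ H_γ(t − R(t̄, δ)) for all t ∈ [t̄, T]. -/
open MeasureTheory

/-- `R(t̄, δ) = t̄ - δ^(1-γ)/(1-γ)`, so that `Hgamma γ (t̄ - R(t̄,δ)) = δ`. -/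
noncomputable def Rtd (γ tbar δ : ℝ) : ℝ := tbar - δ ^ (1 - γ) / (1 - γ)

/-- Comparison lemma, lower bound: if `f ≥ 0` is continuous on `[t̄, T]` and
`f(t) ≥ δ + ∫_{t̄}^t f(s)^γ ds` there, then `f(t) ≥ H_γ(t - R(t̄, δ))` on `[t̄, T]`. -/
theorem stmt3 (γ : ℝ) (hγ : γ ∈ Set.Ico (0 : ℝ) 1) (tbar T δ : ℝ)
    (htbar : 0 ≤ tbar) (hT : tbar ≤ T) (hδ : 0 < δ) (f : ℝ → ℝ)
    (hfc : ContinuousOn f (Set.Icc tbar T))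
    (hf0 : ∀ t ∈ Set.Icc tbar T, 0 ≤ f t)
    (hineq : ∀ t ∈ Set.Icc tbar T, δ + ∫ s in tbar..t, f s ^ γ ≤ f t) :
    ∀ t ∈ Set.Icc tbar T, Hgamma γ (t - Rtd γ tbar δ) ≤ f t := by
  obtain ⟨hγ0, hγ1⟩ := hγ
  have h1γ : (0:ℝ) < 1 - γ := by linarith
  set g : ℝ → ℝ := fun t => δ + ∫ s in tbar..t, f s ^ γ with hg_def
  -- continuity of `f ^ γ` on `Icc tbar T`
  have hfγc : ContinuousOn (fun s => f s ^ γ) (Set.Icc tbar T) :=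
    hfc.rpow_const (fun x _ => Or.inr hγ0)
  have hII : ∀ t ∈ Set.Icc tbar T, IntervalIntegrable (fun s => f s ^ γ) volume tbar t := by
    intro t ht
    apply ContinuousOn.intervalIntegrable
    apply hfγc.mono
    rw [Set.uIcc_of_le ht.1]
    exact Set.Icc_subset_Icc le_rfl ht.2
  -- g ≥ δ on Icc
  have hgδ : ∀ t ∈ Set.Icc tbar T, δ ≤ g t := by
    intro t ht
    have : 0 ≤ ∫ s in tbar..t, f s ^ γ := by
      apply intervalIntegral.integral_nonneg ht.1
      intro s hs
      exact Real.rpow_nonneg (hf0 s ⟨hs.1, hs.2.trans ht.2⟩) γ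
    simp only [hg_def]; linarith
  have hgpos : ∀ t ∈ Set.Icc tbar T, 0 < g t := fun t ht => lt_of_lt_of_le hδ (hgδ t ht)
  have hfg : ∀ t ∈ Set.Icc tbar T, g t ≤ f t := hineq
  -- continuity of g on Icc
  have hgc : ContinuousOn g (Set.Icc tbar T) := by
    apply continuousOn_const.add
    have := intervalIntegral.continuousOn_primitive_interval
      (f := fun s => f s ^ γ) (μ := volume) (a := tbar) (b := T)
      (by rw [Set.uIcc_of_le hT]; exact hfγc.integrableOn_compact isCompact_Icc)
    rwa [Set.uIcc_of_le hT] at this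
  -- the auxiliary function ψ t = (g t)^(1-γ) - (1-γ) * t is monotone on Icc
  set ψ : ℝ → ℝ := fun t => g t ^ (1 - γ) - (1 - γ) * t with hψ_def
  have hψderiv : ∀ x ∈ Set.Ioo tbar T, HasDerivAt ψ
      ((1 - γ) * g x ^ (-γ) * f x ^ γ - (1 - γ)) x := by
    intro x hx
    have hxIcc : x ∈ Set.Icc tbar T := Set.Ioo_subset_Icc_self hx
    have hmem : Set.Icc tbar T ∈ nhds x := Icc_mem_nhds hx.1 hx.2
    have hca : ContinuousAt (fun s => f s ^ γ) x := hfγc.continuousAt hmem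
    have hmeas : StronglyMeasurableAtFilter (fun s => f s ^ γ) (nhds x) volume :=
      ContinuousOn.stronglyMeasurableAtFilter isOpen_Ioo
        (hfγc.mono Set.Ioo_subset_Icc_self) x hx
    have hg' : HasDerivAt g (f x ^ γ) x := by
      have := intervalIntegral.integral_hasDerivAt_right (hII x hxIcc) hmeas hca
      simpa [hg_def] using this.const_add δ
    have hrpow : HasDerivAt (fun y : ℝ => y ^ (1 - γ)) ((1 - γ) * g x ^ (1 - γ - 1)) (g x) :=
      Real.hasDerivAt_rpow_const (Or.inl (ne_of_gt (hgpos x hxIcc)))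
    have hcomp : HasDerivAt (fun t => g t ^ (1 - γ))
        ((1 - γ) * g x ^ (1 - γ - 1) * f x ^ γ) x := hrpow.comp x hg'
    have h1 : (1 : ℝ) - γ - 1 = -γ := by ring
    rw [h1] at hcomp
    have hsub := hcomp.sub ((hasDerivAt_id x).const_mul (1 - γ))
    rw [mul_one] at hsub
    exact hsub
  have hψderiv_nonneg : ∀ x ∈ Set.Ioo tbar T,
      0 ≤ (1 - γ) * g x ^ (-γ) * f x ^ γ - (1 - γ) := by
    intro x hx
    have hxIcc : x ∈ Set.Icc tbar T := Set.Ioo_subset_Icc_self hx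
    have hgp := hgpos x hxIcc
    have hle : g x ^ γ ≤ f x ^ γ :=
      Real.rpow_le_rpow (le_of_lt hgp) (hfg x hxIcc) hγ0
    have hkey : (1:ℝ) ≤ g x ^ (-γ) * f x ^ γ := by
      have h1 : g x ^ (-γ) * g x ^ γ = 1 := by
        rw [← Real.rpow_add hgp]; simp
      have hpos : 0 < g x ^ (-γ) := Real.rpow_pos_of_pos hgp _
      calc (1:ℝ) = g x ^ (-γ) * g x ^ γ := h1.symm
        _ ≤ g x ^ (-γ) * f x ^ γ := by
            exact mul_le_mul_of_nonneg_left hle (le_of_lt hpos)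
    nlinarith
  have hψc : ContinuousOn ψ (Set.Icc tbar T) := by
    apply ContinuousOn.sub
    · exact hgc.rpow_const (fun x hx => Or.inr (le_of_lt h1γ))
    · exact (continuousOn_const.mul continuousOn_id)
  have hψmono : MonotoneOn ψ (Set.Icc tbar T) := by
    apply monotoneOn_of_deriv_nonneg (convex_Icc tbar T) hψc
    · intro x hx
      rw [interior_Icc] at hx
      exact (hψderiv x hx).differentiableAt.differentiableWithinAt
    · intro x hx
      rw [interior_Icc] at hx
      rw [(hψderiv x hx).deriv]
      exact hψderiv_nonneg x hx
  intro t ht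
  have htbar_mem : tbar ∈ Set.Icc tbar T := ⟨le_rfl, hT⟩
  have hψle : ψ tbar ≤ ψ t := hψmono htbar_mem ht ht.1
  have hgtbar : g tbar = δ := by simp [hg_def]
  have hψtbar : ψ tbar = δ ^ (1 - γ) - (1 - γ) * tbar := by
    simp [hψ_def, hgtbar]
  -- so g t ^ (1-γ) ≥ δ^(1-γ) + (1-γ)(t - tbar)
  have hkey : δ ^ (1 - γ) + (1 - γ) * (t - tbar) ≤ g t ^ (1 - γ) := by
    have := hψle
    rw [hψtbar] at this
    simp only [hψ_def] at this
    linarith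
  -- compute Hgamma
  have hpos : 0 < t - Rtd γ tbar δ := by
    have : 0 < δ ^ (1 - γ) / (1 - γ) := by positivity
    simp only [Rtd]
    linarith [ht.1]
  have hHeq : Hgamma γ (t - Rtd γ tbar δ) =
      ((1 - γ) * (t - tbar) + δ ^ (1 - γ)) ^ (1 / (1 - γ)) := by
    rw [Hgamma, max_eq_left (le_of_lt hpos)]
    congr 1
    rw [Rtd]
    field_simp
    ring
  rw [hHeq]
  have hbase : (1 - γ) * (t - tbar) + δ ^ (1 - γ) ≤ g t ^ (1 - γ) := by linarith
  have hbnn : 0 ≤ (1 - γ) * (t - tbar) + δ ^ (1 - γ) := by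
    have h1 : 0 ≤ (1 - γ) * (t - tbar) := mul_nonneg (le_of_lt h1γ) (by linarith [ht.1])
    have h2 : 0 ≤ δ ^ (1 - γ) := Real.rpow_nonneg (le_of_lt hδ) _
    linarith
  calc ((1 - γ) * (t - tbar) + δ ^ (1 - γ)) ^ (1 / (1 - γ))
      ≤ (g t ^ (1 - γ)) ^ (1 / (1 - γ)) :=
        Real.rpow_le_rpow hbnn hbase (by positivity)
    _ = g t := by
        rw [← Real.rpow_mul (le_of_lt (hgpos t ht)), mul_one_div,
          div_self (ne_of_gt h1γ), Real.rpow_one]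
    _ ≤ f t := hfg t ht
end

section
/- (Comparison lemma, upper bound.) Let γ ∈ [0,1), 0 ≤ t̄ ≤ T, δ > 0, and let f : [t̄, T] → ℝ be a nonnegative continuous function such that f(t) ≤ δ + ∫_{t̄}^t f(s)^γ ds for all t ∈ [t̄, T]. Then f(t) ≤ H_γ(t − R(t̄, δ)) for all t ∈ [t̄, T]. -/
open MeasureTheory

/-- Comparison lemma, upper bound: if `f ≥ 0` is continuous on `[t̄, T]` and
`f(t) ≤ δ + ∫_{t̄}^t f(s)^γ ds` there, then `f(t) ≤ H_γ(t - R(t̄, δ))` on `[t̄, T]`. -/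
theorem stmt4 (γ : ℝ) (hγ : γ ∈ Set.Ico (0 : ℝ) 1) (tbar T δ : ℝ)
    (htbar : 0 ≤ tbar) (hT : tbar ≤ T) (hδ : 0 < δ) (f : ℝ → ℝ)
    (hfc : ContinuousOn f (Set.Icc tbar T))
    (hf0 : ∀ t ∈ Set.Icc tbar T, 0 ≤ f t)
    (hineq : ∀ t ∈ Set.Icc tbar T, f t ≤ δ + ∫ s in tbar..t, f s ^ γ) :
    ∀ t ∈ Set.Icc tbar T, f t ≤ Hgamma γ (t - Rtd γ tbar δ) := by
  obtain ⟨hγ0, hγ1⟩ := hγ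
  set c : ℝ := 1 - γ with hc
  have hc0 : 0 < c := by simp only [hc]; linarith
  -- continuous extension of f to all of ℝ
  set F : ℝ → ℝ := fun s => f (Set.projIcc tbar T hT s) with hF
  have hFeq : ∀ s ∈ Set.Icc tbar T, F s = f s := fun s hs => by
    simp [hF, Set.projIcc_of_mem hT hs]
  have hFc : Continuous F := hfc.comp_continuous
    (continuous_subtype_val.comp (continuous_projIcc))
    (fun x => (Set.projIcc tbar T hT x).2)
  have hF0 : ∀ s, 0 ≤ F s := fun s => hf0 _ (Set.projIcc tbar T hT s).2
  have hFγc : Continuous (fun s => F s ^ γ) :=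
    (Real.continuous_rpow_const hγ0).comp hFc
  set g : ℝ → ℝ := fun t => δ + ∫ s in tbar..t, F s ^ γ with hg
  have hgd : ∀ x, HasDerivAt g (F x ^ γ) x := fun x =>
    ((hFγc.integral_hasStrictDerivAt tbar x).hasDerivAt).const_add δ
  have hgc : Continuous g := continuous_iff_continuousAt.2 fun x => (hgd x).continuousAt
  have hgpos : ∀ x ∈ Set.Icc tbar T, δ ≤ g x := fun x hx => by
    have h0 : 0 ≤ ∫ s in tbar..x, F s ^ γ :=
      intervalIntegral.integral_nonneg hx.1 (fun s _ => Real.rpow_nonneg (hF0 s) γ)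
    simp only [hg]; linarith
  have hfg : ∀ x ∈ Set.Icc tbar T, f x ≤ g x := fun x hx => by
    have h1 := hineq x hx
    have h2 : (∫ s in tbar..x, f s ^ γ) = ∫ s in tbar..x, F s ^ γ := by
      apply intervalIntegral.integral_congr
      intro s hs
      rw [Set.uIcc_of_le hx.1] at hs
      show f s ^ γ = F s ^ γ
      rw [hFeq s ⟨hs.1, hs.2.trans hx.2⟩]
    rw [h2] at h1; exact h1
  -- ψ = g^c / c
  set ψ : ℝ → ℝ := fun t => (1 / c) * g t ^ c with hψ
  have hψd : ∀ x ∈ Set.Icc tbar T, HasDerivAt ψ (g x ^ (-γ) * F x ^ γ) x := by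
    intro x hx
    have hgx : g x ≠ 0 := by
      have := hgpos x hx; intro h; rw [h] at this; linarith
    have h := (Real.hasDerivAt_rpow_const (p := c) (Or.inl hgx)).comp x (hgd x)
    have h2 := h.const_mul (1 / c)
    refine h2.congr_deriv ?_
    have hc1 : c - 1 = -γ := by simp [hc]
    rw [hc1]
    field_simp
  have hψ'le : ∀ x ∈ Set.Icc tbar T, g x ^ (-γ) * F x ^ γ ≤ 1 := by
    intro x hx
    have hgx : 0 < g x := lt_of_lt_of_le hδ (hgpos x hx)
    have h1 : F x ^ γ ≤ g x ^ γ :=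
      Real.rpow_le_rpow (hF0 x) (by rw [hFeq x hx]; exact hfg x hx) hγ0
    calc g x ^ (-γ) * F x ^ γ ≤ g x ^ (-γ) * g x ^ γ :=
          mul_le_mul_of_nonneg_left h1 (Real.rpow_nonneg hgx.le _)
      _ = 1 := by rw [← Real.rpow_add hgx]; simp
  -- fencing theorem
  have key : ∀ x ∈ Set.Icc tbar T, ψ x ≤ δ ^ c / c + (x - tbar) := by
    have hψc : ContinuousOn ψ (Set.Icc tbar T) :=
      (continuous_const.mul ((Real.continuous_rpow_const hc0.le).comp hgc)).continuousOn
    have ha : ψ tbar ≤ δ ^ c / c + (tbar - tbar) := by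
      simp [hψ, hg, intervalIntegral.integral_same, div_eq_mul_inv, mul_comm]
    have hBc : ContinuousOn (fun t => δ ^ c / c + (t - tbar)) (Set.Icc tbar T) :=
      (continuous_const.add (continuous_id.sub continuous_const)).continuousOn
    have hB' : ∀ x ∈ Set.Ico tbar T,
        HasDerivWithinAt (fun t => δ ^ c / c + (t - tbar)) 1 (Set.Ici x) x := fun x _ =>
      (((hasDerivAt_id x).sub_const tbar).const_add _).hasDerivWithinAt
    exact fun x hx =>
      image_le_of_deriv_right_le_deriv_boundary hψc
        (fun y hy => (hψd y (Set.Ico_subset_Icc_self hy)).hasDerivWithinAt)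
        ha hBc hB' (fun y hy => hψ'le y (Set.Ico_subset_Icc_self hy)) hx
  -- conclude
  intro t ht
  have hRc : c * (t - Rtd γ tbar δ) = δ ^ c + c * (t - tbar) := by
    rw [Rtd, ← hc]
    field_simp
    ring
  have h1 : g t ^ c ≤ c * (t - Rtd γ tbar δ) := by
    have hk := key t ht
    rw [hψ] at hk
    rw [hRc]
    have := mul_le_mul_of_nonneg_left hk hc0.le
    calc g t ^ c = c * ((1 / c) * g t ^ c) := by field_simp
      _ ≤ c * (δ ^ c / c + (t - tbar)) := this
      _ = δ ^ c + c * (t - tbar) := by field_simp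
  have hRt : 0 < t - Rtd γ tbar δ := by
    have hp : 0 < δ ^ c / c := div_pos (Real.rpow_pos_of_pos hδ c) hc0
    rw [Rtd, ← hc]
    have := ht.1
    linarith
  have h0 : 0 ≤ g t := le_trans hδ.le (hgpos t ht)
  have hgt : g t ≤ (c * (t - Rtd γ tbar δ)) ^ (1 / c) := by
    have heq : g t = (g t ^ c) ^ (1 / c) := by
      rw [one_div, Real.rpow_rpow_inv h0 hc0.ne']
    rw [heq]
    exact Real.rpow_le_rpow (Real.rpow_nonneg h0 c) h1 (by positivity)
  have hH : Hgamma γ (t - Rtd γ tbar δ) = (c * (t - Rtd γ tbar δ)) ^ (1 / c) := by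
    rw [Hgamma, max_eq_left hRt.le, ← hc]
  rw [hH]
  exact le_trans (hfg t ht) hgt
end

section
/- Let γ ∈ [0,1), 0 ≤ t̄ ≤ T and δ > 0. The function t ↦ H_γ(t − R(t̄, δ)) is continuously differentiable on [t̄, T] and is a solution of the integral equation x(t) = δ + ∫_{t̄}^t x(s)^γ ds for all t ∈ [t̄, T]. -/
open MeasureTheory

/-- For `γ ∈ [0,1)`, `0 ≤ t̄ ≤ T`, `δ > 0`, the function `t ↦ H_γ(t - R(t̄, δ))` is
continuously differentiable on `[t̄, T]` and solves `x(t) = δ + ∫_{t̄}^t x(s)^γ ds` there. -/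
theorem stmt5 (γ : ℝ) (hγ : γ ∈ Set.Ico (0 : ℝ) 1) (tbar T δ : ℝ)
    (htbar : 0 ≤ tbar) (hT : tbar ≤ T) (hδ : 0 < δ) :
    ContDiffOn ℝ 1 (fun t => Hgamma γ (t - Rtd γ tbar δ)) (Set.Icc tbar T) ∧
    ∀ t ∈ Set.Icc tbar T,
      Hgamma γ (t - Rtd γ tbar δ) = δ + ∫ s in tbar..t, Hgamma γ (s - Rtd γ tbar δ) ^ γ := by
  obtain ⟨hγ0, hγ1⟩ := hγ
  set c : ℝ := 1 - γ with hcdef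
  have hc : 0 < c := by simp only [hcdef]; linarith
  set R : ℝ := Rtd γ tbar δ with hRdef
  have hRlt : R < tbar := by
    have h1 : 0 < δ ^ c / c := div_pos (Real.rpow_pos_of_pos hδ c) hc
    have : R = tbar - δ ^ c / c := by rw [hRdef, Rtd]
    linarith
  set g : ℝ → ℝ := fun t => (c * (t - R)) ^ (1 / c) with hg
  have hpos : ∀ t : ℝ, R < t → 0 < c * (t - R) := fun t ht =>
    mul_pos hc (by linarith)
  have heq : ∀ t : ℝ, R < t → Hgamma γ (t - R) = g t := by
    intro t ht
    have hm : max (t - R) 0 = t - R := max_eq_left (by linarith)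
    rw [Hgamma, hm, hg]
  have hderiv : ∀ t : ℝ, R < t → HasDerivAt g ((g t) ^ γ) t := by
    intro t ht
    have hu : HasDerivAt (fun t : ℝ => c * (t - R)) c t := by
      simpa using ((hasDerivAt_id t).sub_const R).const_mul c
    have h0 : c * (t - R) ≠ 0 := (hpos t ht).ne'
    have h := hu.rpow_const (p := 1 / c) (Or.inl h0)
    have h1 : 1 / c * γ = 1 / c - 1 := by
      field_simp
      simp only [hcdef]; ring
    have key : (g t) ^ γ = c * (1 / c) * (c * (t - R)) ^ (1 / c - 1) := by
      show ((c * (t - R)) ^ (1 / c)) ^ γ = _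
      rw [← Real.rpow_mul (hpos t ht).le, h1, mul_one_div_cancel hc.ne', one_mul]
    rw [key]
    exact h
  have hgpos : ∀ t : ℝ, R < t → 0 < g t := fun t ht =>
    Real.rpow_pos_of_pos (hpos t ht) _
  have hgcdiff : ∀ t : ℝ, R < t → ContDiffAt ℝ 1 g t := by
    intro t ht
    have h0 : c * (t - R) ≠ 0 := (hpos t ht).ne'
    have hinner : ContDiffAt ℝ 1 (fun t : ℝ => c * (t - R)) t := by fun_prop
    exact (Real.contDiffAt_rpow_const_of_ne (p := 1 / c) h0).comp t hinner
  have hgtbar : g tbar = δ := by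
    have h1 : tbar - R = δ ^ c / c := by rw [hRdef, Rtd]; ring
    rw [hg]
    simp only [h1, mul_div_cancel₀ _ hc.ne']
    rw [← Real.rpow_mul hδ.le, mul_one_div_cancel hc.ne', Real.rpow_one]
  constructor
  · intro t ht
    have hRt : R < t := lt_of_lt_of_le hRlt ht.1
    have hev : (fun t => Hgamma γ (t - Rtd γ tbar δ)) =ᶠ[nhds t] g := by
      filter_upwards [eventually_gt_nhds hRt] with s hs
      exact heq s hs
    exact (((hgcdiff t hRt).congr_of_eventuallyEq hev)).contDiffWithinAt
  · intro t ht
    have hIcc : Set.uIcc tbar t = Set.Icc tbar t := Set.uIcc_of_le ht.1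
    have hcont : ContinuousOn (fun s => g s ^ γ) (Set.uIcc tbar t) := by
      intro s hs
      rw [hIcc] at hs
      have hRs : R < s := lt_of_lt_of_le hRlt hs.1
      exact (((Real.continuousAt_rpow_const (g s) γ
        (Or.inl (hgpos s hRs).ne')).comp (hderiv s hRs).continuousAt)).continuousWithinAt
    have hFTC : ∫ s in tbar..t, g s ^ γ = g t - g tbar := by
      apply intervalIntegral.integral_eq_sub_of_hasDerivAt
      · intro s hs
        rw [hIcc] at hs
        exact hderiv s (lt_of_lt_of_le hRlt hs.1)
      · exact hcont.intervalIntegrable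
    have hcongr : ∫ s in tbar..t, Hgamma γ (s - Rtd γ tbar δ) ^ γ = ∫ s in tbar..t, g s ^ γ := by
      apply intervalIntegral.integral_congr
      intro s hs
      rw [hIcc] at hs
      show Hgamma γ (s - Rtd γ tbar δ) ^ γ = g s ^ γ
      rw [heq s (lt_of_lt_of_le hRlt hs.1)]
    rw [heq t (lt_of_lt_of_le hRlt ht.1), hcongr, hFTC, hgtbar]
    ring
end

section
/- Let γ ∈ [0,1), 0 ≤ t̄ ≤ T and δ > 0. If x : [t̄, T] → ℝ is a continuous nonnegative function satisfying x(t) = δ + ∫_{t̄}^t x(s)^γ ds for all t ∈ [t̄, T], then x(t) = H_γ(t − R(t̄, δ)) for all t ∈ [t̄, T]; in particular this integral equation has a unique continuous nonnegative solution on [t̄, T]. -/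
open MeasureTheory

lemma key6 (γ : ℝ) (hγ : γ ∈ Set.Ico (0 : ℝ) 1) (tbar T δ : ℝ)
    (hT : tbar ≤ T) (hδ : 0 < δ) (x : ℝ → ℝ)
    (hxc : ContinuousOn x (Set.Icc tbar T))
    (hx0 : ∀ t ∈ Set.Icc tbar T, 0 ≤ x t)
    (heq : ∀ t ∈ Set.Icc tbar T, x t = δ + ∫ s in tbar..t, x s ^ γ) :
    ∀ t ∈ Set.Icc tbar T, x t = Hgamma γ (t - Rtd γ tbar δ) := by
  have h1γ : 0 < 1 - γ := by linarith [hγ.2]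
  -- x ≥ δ on the interval
  have hxδ : ∀ t ∈ Set.Icc tbar T, δ ≤ x t := by
    intro t ht
    have hint : 0 ≤ ∫ s in tbar..t, x s ^ γ := by
      apply intervalIntegral.integral_nonneg ht.1
      intro s hs
      exact Real.rpow_nonneg (hx0 s ⟨hs.1, hs.2.trans ht.2⟩) γ
    rw [heq t ht]; linarith
  have hxpos : ∀ t ∈ Set.Icc tbar T, 0 < x t := fun t ht => lt_of_lt_of_le hδ (hxδ t ht)
  -- continuity of the integrand
  have hcont : ContinuousOn (fun s => x s ^ γ) (Set.Icc tbar T) :=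
    hxc.rpow_const (fun s hs => Or.inl (ne_of_gt (hxpos s hs)))
  -- the right derivative of x on [tbar, T)
  have hder : ∀ t ∈ Set.Ico tbar T, HasDerivWithinAt x (x t ^ γ) (Set.Ici t) t := by
    intro t ht
    have htT : t ∈ Set.Icc tbar T := ⟨ht.1, ht.2.le⟩
    have hmem : Set.Icc tbar T ∈ nhdsWithin t (Set.Ici t) :=
      Icc_mem_nhdsGE_of_mem ⟨ht.1, ht.2⟩
    have hii : IntervalIntegrable (fun s => x s ^ γ) volume tbar t := by
      apply (hcont.mono ?_).intervalIntegrable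
      rw [Set.uIcc_of_le ht.1]
      exact Set.Icc_subset_Icc le_rfl ht.2.le
    have hmem' : Set.Icc tbar T ∈ nhdsWithin t (Set.Ioi t) :=
      Icc_mem_nhdsGT_of_mem ⟨ht.1, ht.2⟩
    have hmeas : StronglyMeasurableAtFilter (fun s => x s ^ γ) (nhdsWithin t (Set.Ioi t)) :=
      ⟨Set.Icc tbar T, hmem', (hcont.aestronglyMeasurable measurableSet_Icc)⟩
    have hcw : ContinuousWithinAt (fun s => x s ^ γ) (Set.Ioi t) t :=
      (hcont t htT).mono_of_mem_nhdsWithin hmem'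
    have hF : HasDerivWithinAt (fun u => ∫ s in tbar..u, x s ^ γ) (x t ^ γ) (Set.Ici t) t :=
      intervalIntegral.integral_hasDerivWithinAt_right hii hmeas hcw
    have hF' : HasDerivWithinAt (fun u => δ + ∫ s in tbar..u, x s ^ γ) (x t ^ γ)
        (Set.Ici t) t := hF.const_add δ
    apply hF'.congr_of_eventuallyEq_of_mem ?_ (Set.self_mem_Ici)
    · filter_upwards [hmem] with s hs
      exact heq s hs
  -- f = x ^ (1-γ) and g = (1-γ)(t - R) have the same right derivative 1-γ
  set R := Rtd γ tbar δ with hR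
  have hfder : ∀ t ∈ Set.Ico tbar T,
      HasDerivWithinAt (fun u => x u ^ (1 - γ)) (1 - γ) (Set.Ici t) t := by
    intro t ht
    have htT : t ∈ Set.Icc tbar T := ⟨ht.1, ht.2.le⟩
    have h := (hder t ht).rpow_const (p := 1 - γ) (Or.inl (ne_of_gt (hxpos t htT)))
    convert h using 1
    have : x t ^ γ * (x t ^ (1 - γ - 1)) = 1 := by
      rw [← Real.rpow_add (hxpos t htT)]
      norm_num
    calc (1 : ℝ) - γ = (x t ^ γ * x t ^ (1 - γ - 1)) * (1 - γ) := by rw [this]; ring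
    _ = x t ^ γ * (1 - γ) * x t ^ (1 - γ - 1) := by ring
  have hgder : ∀ t ∈ Set.Ico tbar T,
      HasDerivWithinAt (fun u => (1 - γ) * (u - R)) (1 - γ) (Set.Ici t) t := by
    intro t ht
    have : HasDerivAt (fun u => (1 - γ) * (u - R)) ((1 - γ) * 1) t :=
      ((hasDerivAt_id t).sub_const R).const_mul (1 - γ)
    simpa using this.hasDerivWithinAt
  have hfc : ContinuousOn (fun u => x u ^ (1 - γ)) (Set.Icc tbar T) :=
    hxc.rpow_const (fun s hs => Or.inl (ne_of_gt (hxpos s hs)))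
  have hgc : ContinuousOn (fun u => (1 - γ) * (u - R)) (Set.Icc tbar T) := by
    fun_prop
  have hxtbar : x tbar = δ := by
    have := heq tbar ⟨le_rfl, hT⟩
    simpa using this
  have hi : x tbar ^ (1 - γ) = (1 - γ) * (tbar - R) := by
    rw [hxtbar, hR, Rtd]
    field_simp
    ring
  have hmain := eq_of_has_deriv_right_eq hfder hgder hfc hgc hi
  intro t ht
  have h1 : x t ^ (1 - γ) = (1 - γ) * (t - R) := hmain t ht
  have htR : 0 < t - R := by
    have : 0 < δ ^ (1 - γ) / (1 - γ) := by positivity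
    rw [hR, Rtd]; have := ht.1; linarith
  have : x t = (x t ^ (1 - γ)) ^ (1 / (1 - γ)) := by
    rw [one_div, Real.rpow_rpow_inv (hx0 t ht) (ne_of_gt h1γ)]
  rw [this, h1, Hgamma, max_eq_left htR.le]

/-- If a continuous nonnegative `x` satisfies `x(t) = δ + ∫_{t̄}^t x(s)^γ ds` on `[t̄, T]`,
then `x(t) = H_γ(t - R(t̄, δ))` on `[t̄, T]`; in particular the continuous nonnegative
solution of this integral equation is unique. -/
theorem stmt6 (γ : ℝ) (hγ : γ ∈ Set.Ico (0 : ℝ) 1) (tbar T δ : ℝ)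
    (htbar : 0 ≤ tbar) (hT : tbar ≤ T) (hδ : 0 < δ) (x : ℝ → ℝ)
    (hxc : ContinuousOn x (Set.Icc tbar T))
    (hx0 : ∀ t ∈ Set.Icc tbar T, 0 ≤ x t)
    (heq : ∀ t ∈ Set.Icc tbar T, x t = δ + ∫ s in tbar..t, x s ^ γ) :
    (∀ t ∈ Set.Icc tbar T, x t = Hgamma γ (t - Rtd γ tbar δ)) ∧
    (∀ y : ℝ → ℝ, ContinuousOn y (Set.Icc tbar T) → (∀ t ∈ Set.Icc tbar T, 0 ≤ y t) →
      (∀ t ∈ Set.Icc tbar T, y t = δ + ∫ s in tbar..t, y s ^ γ) →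
      ∀ t ∈ Set.Icc tbar T, y t = x t) := by
  have hx := key6 γ hγ tbar T δ hT hδ x hxc hx0 heq
  refine ⟨hx, fun y hyc hy0 hyeq t ht => ?_⟩
  rw [key6 γ hγ tbar T δ hT hδ y hyc hy0 hyeq t ht, hx t ht]
end

section
/- Let ρ : ℝ → ℝ be a C^∞ function with ρ ≥ 0, support contained in [−1, 1], ∫_ℝ ρ(x) dx = 1, and additionally ρ(x) ≥ 3/4 for all x ∈ [−1/2, 1/2]. Let φ_δ be the mollified absolute value. Then for every x ∈ ℝ with |x| ≤ δ/2 one has φ_δ''(x) ≥ 3/(4δ). -/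
open MeasureTheory

/-- The mollified absolute value `φ_δ(x) = (1/δ) ∫_{-δ}^{δ} ρ(y/δ) |x - y| dy`. -/
noncomputable def mollAbs (ρ : ℝ → ℝ) (δ : ℝ) (x : ℝ) : ℝ :=
  (1 / δ) * ∫ y in (-δ)..δ, ρ (y / δ) * |x - y|

/-- Splitting the integral of `g y * |t - y|` over `[-δ, δ]` at `t`. -/
lemma mollAbs_aux (g : ℝ → ℝ) (hc : Continuous g) (δ t : ℝ) (ht1 : -δ ≤ t) (ht2 : t ≤ δ) :
    (∫ y in (-δ)..δ, g y * |t - y|)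
      = 2*t*(∫ y in (-δ)..t, g y) - 2*(∫ y in (-δ)..t, y * g y)
        + (∫ y in (-δ)..δ, y * g y) - t*(∫ y in (-δ)..δ, g y) := by
  have habs : Continuous fun y : ℝ => g y * |t - y| :=
    hc.mul (continuous_const.sub continuous_id).abs
  have hyg : Continuous fun y : ℝ => y * g y := continuous_id.mul hc
  have split : (∫ y in (-δ)..t, g y * |t - y|) + (∫ y in t..δ, g y * |t - y|)
      = ∫ y in (-δ)..δ, g y * |t - y| :=
    intervalIntegral.integral_add_adjacent_intervals
      (habs.intervalIntegrable _ _) (habs.intervalIntegrable _ _)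
  have sA : (∫ y in (-δ)..t, g y) + (∫ y in t..δ, g y) = ∫ y in (-δ)..δ, g y :=
    intervalIntegral.integral_add_adjacent_intervals
      (hc.intervalIntegrable _ _) (hc.intervalIntegrable _ _)
  have sB : (∫ y in (-δ)..t, y * g y) + (∫ y in t..δ, y * g y) = ∫ y in (-δ)..δ, y * g y :=
    intervalIntegral.integral_add_adjacent_intervals
      (hyg.intervalIntegrable _ _) (hyg.intervalIntegrable _ _)
  have e1 : (∫ y in (-δ)..t, g y * |t - y|) = ∫ y in (-δ)..t, (t * g y - y * g y) := by
    apply intervalIntegral.integral_congr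
    intro y hy
    rw [Set.uIcc_of_le ht1] at hy
    dsimp only
    rw [abs_of_nonneg (by linarith [hy.2])]
    ring
  have e2 : (∫ y in t..δ, g y * |t - y|) = ∫ y in t..δ, (y * g y - t * g y) := by
    apply intervalIntegral.integral_congr
    intro y hy
    rw [Set.uIcc_of_le ht2] at hy
    dsimp only
    rw [abs_of_nonpos (by linarith [hy.1])]
    ring
  have i1 : (∫ y in (-δ)..t, (t * g y - y * g y))
      = t * (∫ y in (-δ)..t, g y) - (∫ y in (-δ)..t, y * g y) := by
    rw [intervalIntegral.integral_sub ((show Continuous (fun y => t * g y) from continuous_const.mul hc).intervalIntegrable _ _)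
      (hyg.intervalIntegrable _ _), intervalIntegral.integral_const_mul]
  have i2 : (∫ y in t..δ, (y * g y - t * g y))
      = (∫ y in t..δ, y * g y) - t * (∫ y in t..δ, g y) := by
    rw [intervalIntegral.integral_sub (hyg.intervalIntegrable _ _)
      ((show Continuous (fun y => t * g y) from continuous_const.mul hc).intervalIntegrable _ _), intervalIntegral.integral_const_mul]
  rw [← split, e1, e2, i1, i2]
  linear_combination sB - t * sA

/-- If `ρ` is `C^∞`, nonnegative, supported in `[-1,1]`, `∫ ρ = 1`, and `ρ ≥ 3/4` on
`[-1/2, 1/2]`, then for every `x` with `|x| ≤ δ/2` one has `φ_δ''(x) ≥ 3/(4δ)`. -/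
theorem stmt9 (ρ : ℝ → ℝ) (hρs : ContDiff ℝ (⊤ : ℕ∞) ρ) (hρ0 : ∀ x, 0 ≤ ρ x)
    (hρsupp : Function.support ρ ⊆ Set.Icc (-1) 1) (hρint : ∫ x, ρ x = 1)
    (hρ34 : ∀ x ∈ Set.Icc (-(1/2) : ℝ) (1/2), (3/4 : ℝ) ≤ ρ x)
    (δ : ℝ) (hδ : 0 < δ) :
    ∀ x : ℝ, |x| ≤ δ / 2 → 3 / (4 * δ) ≤ deriv (deriv (mollAbs ρ δ)) x := by
  intro x hx
  have hρc : Continuous ρ := hρs.continuous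
  have hc : Continuous (fun y : ℝ => ρ (y / δ)) := hρc.comp (continuous_id.div_const δ)
  have hyg : Continuous fun y : ℝ => y * ρ (y / δ) := continuous_id.mul hc
  set A : ℝ → ℝ := fun t => ∫ y in (-δ)..t, ρ (y / δ) with hAdef
  set B : ℝ → ℝ := fun t => ∫ y in (-δ)..t, y * ρ (y / δ) with hBdef
  have hA : ∀ t : ℝ, HasDerivAt A (ρ (t / δ)) t := fun t =>
    intervalIntegral.integral_hasDerivAt_right (hc.intervalIntegrable _ _)
      (hc.stronglyMeasurableAtFilter _ _) hc.continuousAt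
  have hB : ∀ t : ℝ, HasDerivAt B (t * ρ (t / δ)) t := fun t =>
    intervalIntegral.integral_hasDerivAt_right (hyg.intervalIntegrable _ _)
      (hyg.stronglyMeasurableAtFilter _ _) hyg.continuousAt
  have hx1 := (abs_le.1 hx).1
  have hx2 := (abs_le.1 hx).2
  have hxI : x ∈ Set.Ioo (-δ) δ := ⟨by linarith, by linarith⟩
  have key : ∀ t ∈ Set.Ioo (-δ) δ, mollAbs ρ δ t
      = (1/δ) * (2*t*A t - 2*B t + B δ - t * A δ) := by
    intro t ht
    unfold mollAbs
    rw [mollAbs_aux _ hc δ t ht.1.le ht.2.le]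
  have hd1 : ∀ x' ∈ Set.Ioo (-δ) δ,
      deriv (mollAbs ρ δ) x' = (1/δ) * (2 * A x' - A δ) := by
    intro x' hx'
    have hev : mollAbs ρ δ =ᶠ[nhds x']
        (fun t => (1/δ) * (2*t*A t - 2*B t + B δ - t * A δ)) :=
      Filter.eventuallyEq_of_mem (isOpen_Ioo.mem_nhds hx') key
    rw [hev.deriv_eq]
    have H : HasDerivAt (fun t => 2*t*A t - 2*B t + B δ - t * A δ)
        (2 * A x' - A δ) x' := by
      have e1 := (((hasDerivAt_id x').const_mul (2:ℝ)).mul (hA x')).sub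
        ((hB x').const_mul 2)
      have e2 := (e1.add_const (B δ)).sub ((hasDerivAt_id x').mul_const (A δ))
      refine e2.congr_deriv ?_
      simp only [id_eq]
      ring
    exact (H.const_mul (1/δ)).deriv
  have hev2 : deriv (mollAbs ρ δ) =ᶠ[nhds x] (fun t => (1/δ) * (2 * A t - A δ)) :=
    Filter.eventuallyEq_of_mem (isOpen_Ioo.mem_nhds hxI) hd1
  rw [hev2.deriv_eq]
  have H2 : HasDerivAt (fun t => (1/δ) * (2 * A t - A δ)) ((1/δ) * (2 * ρ (x / δ))) x :=
    (((hA x).const_mul 2).sub_const (A δ)).const_mul (1/δ)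
  rw [H2.deriv]
  have hr : (3/4 : ℝ) ≤ ρ (x / δ) := by
    apply hρ34
    constructor
    · rw [le_div_iff₀ hδ]; linarith
    · rw [div_le_iff₀ hδ]; linarith
  rw [div_le_iff₀ (by positivity)]
  have h8 : (1/δ) * (2 * ρ (x / δ)) * (4 * δ) = 8 * ρ (x / δ) := by
    field_simp; ring
  rw [h8]
  linarith
end

section
/- Let γ ∈ (0,1), ε > 0, and set δ = 2^{(γ−2)/(1+γ)}·ε^{2/(1+γ)} (so that 3ε²/(8δ) − δ^γ/2^γ = δ^γ/2^{γ+1}). Let ρ : ℝ → ℝ be C^∞ with ρ ≥ 0, supp ρ ⊆ [−1, 1], ∫_ℝ ρ = 1, and ρ ≥ 3/4 on [−1/2, 1/2], and let φ_δ be the mollified absolute value. Then for every x ∈ ℝ: sgn(x)·|x|^γ·φ_δ'(x) + (ε²/2)·φ_δ''(x) ≥ δ^γ / 2^{γ+1}. -/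
open MeasureTheory

-- FTC lemma
lemma iicDeriv (f : ℝ → ℝ) (hc : Continuous f) (hi : Integrable f) (x : ℝ) :
    HasDerivAt (fun x => ∫ y in Set.Iic x, f y) (f x) x := by
  have h0 : ∀ u : ℝ, (∫ y in Set.Iic u, f y) =
      (∫ y in Set.Iic (0:ℝ), f y) + ∫ y in (0:ℝ)..u, f y := by
    intro u
    rw [← intervalIntegral.integral_Iic_sub_Iic hi.integrableOn hi.integrableOn]
    ring
  have h := (intervalIntegral.integral_hasDerivAt_right (a := 0) (b := x)
    (hi.intervalIntegrable) (hc.stronglyMeasurableAtFilter _ _) hc.continuousAt).const_add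
    (∫ y in Set.Iic (0:ℝ), f y)
  exact h.congr_of_eventuallyEq (Filter.Eventually.of_forall h0)

-- splitting formula
lemma splitAbs (f : ℝ → ℝ) (hc : Continuous f) (hcs : HasCompactSupport f) (x : ℝ) :
    (∫ y, f y * |x - y|) =
      x * (2 * (∫ y in Set.Iic x, f y) - ∫ y, f y)
        - 2 * (∫ y in Set.Iic x, y * f y) + ∫ y, y * f y := by
  have hfi : Integrable f := hc.integrable_of_hasCompactSupport hcs
  have hgi : Integrable (fun y => y * f y) :=
    (continuous_id.mul hc).integrable_of_hasCompactSupport (hcs.mul_left)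
  have hki : Integrable (fun y => f y * |x - y|) :=
    (hc.mul ((continuous_const.sub continuous_id).abs)).integrable_of_hasCompactSupport
      (hcs.mul_right)
  have hsplit := intervalIntegral.integral_Iic_add_Ioi (b := x) hki.integrableOn hki.integrableOn
  have h1 : (∫ y in Set.Iic x, f y * |x - y|) =
      x * (∫ y in Set.Iic x, f y) - ∫ y in Set.Iic x, y * f y := by
    have e : Set.EqOn (fun y => f y * |x - y|) (fun y => x * f y - y * f y) (Set.Iic x) := by
      intro y hy
      have : (0:ℝ) ≤ x - y := sub_nonneg.2 hy
      simp only [abs_of_nonneg this]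
      ring
    rw [setIntegral_congr_fun measurableSet_Iic e,
      integral_sub ((hfi.const_mul x).integrableOn) hgi.integrableOn, MeasureTheory.integral_const_mul]
  have h2 : (∫ y in Set.Ioi x, f y * |x - y|) =
      ((∫ y, y * f y) - ∫ y in Set.Iic x, y * f y)
        - x * ((∫ y, f y) - ∫ y in Set.Iic x, f y) := by
    have e : Set.EqOn (fun y => f y * |x - y|) (fun y => y * f y - x * f y) (Set.Ioi x) := by
      intro y hy
      have : x - y ≤ 0 := sub_nonpos.2 (le_of_lt hy)
      simp only [abs_of_nonpos this]
      ring
    rw [setIntegral_congr_fun measurableSet_Ioi e,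
      integral_sub hgi.integrableOn ((hfi.const_mul x).integrableOn), MeasureTheory.integral_const_mul]
    have e1 : (∫ y in Set.Ioi x, y * f y) = (∫ y, y * f y) - ∫ y in Set.Iic x, y * f y := by
      rw [← intervalIntegral.integral_Iic_add_Ioi (b := x) hgi.integrableOn hgi.integrableOn]
      ring
    have e2 : (∫ y in Set.Ioi x, f y) = (∫ y, f y) - ∫ y in Set.Iic x, f y := by
      rw [← intervalIntegral.integral_Iic_add_Ioi (b := x) hfi.integrableOn hfi.integrableOn]
      ring
    rw [e1, e2]
  rw [← hsplit, h1, h2]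
  ring

/-- For `γ ∈ (0,1)`, `ε > 0` and `δ = 2^((γ-2)/(1+γ)) · ε^(2/(1+γ))`, with `ρ` a mollifier as
above (`ρ ≥ 3/4` on `[-1/2,1/2]`), one has, for every `x ∈ ℝ`,
`sgn(x)·|x|^γ·φ_δ'(x) + (ε²/2)·φ_δ''(x) ≥ δ^γ / 2^(γ+1)`. -/
theorem stmt10 (γ : ℝ) (hγ : γ ∈ Set.Ioo (0 : ℝ) 1) (ε : ℝ) (hε : 0 < ε)
    (δ : ℝ) (hδdef : δ = (2 : ℝ) ^ ((γ - 2) / (1 + γ)) * ε ^ (2 / (1 + γ)))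
    (ρ : ℝ → ℝ) (hρs : ContDiff ℝ (⊤ : ℕ∞) ρ) (hρ0 : ∀ x, 0 ≤ ρ x)
    (hρsupp : Function.support ρ ⊆ Set.Icc (-1) 1) (hρint : ∫ x, ρ x = 1)
    (hρ34 : ∀ x ∈ Set.Icc (-(1/2) : ℝ) (1/2), (3/4 : ℝ) ≤ ρ x) :
    ∀ x : ℝ,
      δ ^ γ / 2 ^ (γ + 1)
        ≤ sgn x * |x| ^ γ * deriv (mollAbs ρ δ) x
          + ε ^ 2 / 2 * deriv (deriv (mollAbs ρ δ)) x := by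

  obtain ⟨hγ0, hγ1⟩ := hγ
  have h1γ : (0:ℝ) < 1 + γ := by linarith
  have hδ : 0 < δ := by
    rw [hδdef]
    positivity
  set f : ℝ → ℝ := fun y => ρ (y / δ) / δ with hf_def
  have hρc : Continuous ρ := hρs.continuous
  have hfc : Continuous f := (hρc.comp (continuous_id.div_const δ)).div_const δ
  have hfsupp : ∀ y, y ∉ Set.Icc (-δ) δ → f y = 0 := by
    intro y hy
    have hz : ρ (y / δ) = 0 := by
      by_contra h
      have hm := hρsupp (Function.mem_support.2 h)
      rw [Set.mem_Icc] at hm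
      refine hy (Set.mem_Icc.2 ⟨?_, ?_⟩)
      · have := hm.1
        rw [neg_le, ← neg_div, div_le_one hδ] at this
        linarith
      · have := hm.2
        rw [div_le_one hδ] at this
        exact this
    simp [hf_def, hz]
  have hcs : HasCompactSupport f :=
    HasCompactSupport.intro isCompact_Icc hfsupp
  have hfi : Integrable f := hfc.integrable_of_hasCompactSupport hcs
  have hgi : Integrable (fun y => y * f y) :=
    (continuous_id.mul hfc).integrable_of_hasCompactSupport hcs.mul_left
  have hf0 : ∀ y, 0 ≤ f y := fun y => div_nonneg (hρ0 _) hδ.le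
  have hm0 : (∫ y, f y) = 1 := by
    have h1 : (∫ y : ℝ, ρ (y / δ)) = |δ| • ∫ y, ρ y :=
      MeasureTheory.Measure.integral_comp_div ρ δ
    have : (∫ y, f y) = (∫ y : ℝ, ρ (y / δ)) / δ := by
      simp only [hf_def, div_eq_mul_inv, MeasureTheory.integral_mul_const]
    rw [this, h1, hρint, abs_of_pos hδ, smul_eq_mul, mul_one, div_self hδ.ne']
  set G : ℝ → ℝ := fun x => ∫ y in Set.Iic x, f y with hG_def
  set H : ℝ → ℝ := fun x => ∫ y in Set.Iic x, y * f y with hH_def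
  have key : ∀ x, mollAbs ρ δ x = x * (2 * G x - 1) - 2 * H x + (∫ y, y * f y) := by
    intro x
    have h := splitAbs f hfc hcs x
    rw [hm0] at h
    have hmoll : mollAbs ρ δ x = ∫ y, f y * |x - y| := by
      unfold mollAbs
      rw [intervalIntegral.integral_of_le (by linarith : -δ ≤ δ),
        ← MeasureTheory.integral_const_mul]
      have hcg : ∀ y : ℝ, 1 / δ * (ρ (y / δ) * |x - y|) = f y * |x - y| := by
        intro y
        simp only [hf_def]
        ring
      simp only [hcg]
      refine setIntegral_eq_integral_of_ae_compl_eq_zero ?_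
      have hne : ∀ᵐ y : ℝ, y ≠ -δ := by
        refine MeasureTheory.ae_iff.2 ?_
        refine MeasureTheory.measure_mono_null (fun y hy => ?_) (measure_singleton (-δ))
        simpa using hy
      filter_upwards [hne] with y hy hyc
      have : y ∉ Set.Icc (-δ) δ := by
        intro hmem
        rw [Set.mem_Icc] at hmem
        exact hyc (Set.mem_Ioc.2 ⟨lt_of_le_of_ne hmem.1 (Ne.symm hy), hmem.2⟩)
      rw [hfsupp y this, zero_mul]
    rw [hmoll, h]
  have hGd : ∀ x, HasDerivAt G (f x) x := fun x => iicDeriv f hfc hfi x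
  have hHd : ∀ x, HasDerivAt H (x * f x) x := fun x =>
    iicDeriv _ (continuous_id.mul hfc) hgi x
  have hφd : ∀ x, HasDerivAt (mollAbs ρ δ) (2 * G x - 1) x := by
    intro x
    have h : HasDerivAt (fun x => x * (2 * G x - 1) - 2 * H x + (∫ y, y * f y))
        (1 * (2 * G x - 1) + x * (2 * f x) - 2 * (x * f x)) x :=
      (((hasDerivAt_id x).mul (((hGd x).const_mul 2).sub_const 1)).sub
        ((hHd x).const_mul 2)).add_const _
    have h' := h.congr_of_eventuallyEq (Filter.Eventually.of_forall key)
    exact h'.congr_deriv (by ring)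
  have hder1 : deriv (mollAbs ρ δ) = fun x => 2 * G x - 1 :=
    funext fun x => (hφd x).deriv
  have hder1' : ∀ x, deriv (mollAbs ρ δ) x = 2 * G x - 1 := fun x => (hφd x).deriv
  have hder2 : ∀ x, deriv (deriv (mollAbs ρ δ)) x = 2 * f x := by
    intro x
    rw [hder1]
    exact (((hGd x).const_mul 2).sub_const 1).deriv
  -- bounds on G
  have hG0 : ∀ x, 0 ≤ G x := fun x =>
    setIntegral_nonneg measurableSet_Iic fun y _ => hf0 y
  have hG1 : ∀ x, G x ≤ 1 := fun x =>
    hm0 ▸ setIntegral_le_integral hfi (Filter.Eventually.of_forall hf0)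
  have hmass : (3/4 : ℝ) ≤ ∫ y in Set.Ioc (-(δ/2)) (δ/2), f y := by
    have hb : ∀ y ∈ Set.Ioc (-(δ/2)) (δ/2), (3/(4*δ)) ≤ f y := by
      intro y hy
      rw [Set.mem_Ioc] at hy
      have h1 : -(1/2 : ℝ) ≤ y / δ := by
        rw [le_div_iff₀ hδ]
        nlinarith [hy.1]
      have h2 : y / δ ≤ 1/2 := by
        rw [div_le_iff₀ hδ]
        nlinarith [hy.2]
      have h3 := hρ34 _ (Set.mem_Icc.2 ⟨h1, h2⟩)
      have : (3/4 : ℝ) / δ ≤ ρ (y / δ) / δ := by gcongr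
      calc (3/(4*δ) : ℝ) = (3/4) / δ := by ring
        _ ≤ ρ (y / δ) / δ := this
    have hvol : (volume (Set.Ioc (-(δ/2)) (δ/2))).toReal = δ := by
      rw [Real.volume_Ioc, ENNReal.toReal_ofReal (by linarith)]
      ring
    have := setIntegral_ge_of_const_le_real measurableSet_Ioc
      (by rw [Real.volume_Ioc]; exact ENNReal.ofReal_ne_top) hb hfi.integrableOn
    rw [measureReal_def, hvol] at this
    calc (3/4 : ℝ) = 3/(4*δ) * δ := by field_simp
      _ ≤ _ := this
  have hGhigh : ∀ x, δ/2 ≤ x → 3/4 ≤ G x := by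
    intro x hx
    refine le_trans hmass (setIntegral_mono_set hfi.integrableOn
      (Filter.Eventually.of_forall fun y => hf0 y)
      (HasSubset.Subset.eventuallyLE ?_))
    intro y hy
    rw [Set.mem_Ioc] at hy
    exact Set.mem_Iic.2 (le_trans hy.2 hx)
  have hGlow : ∀ x, x ≤ -(δ/2) → G x ≤ 1/4 := by
    intro x hx
    have h1 : G x ≤ ∫ y in Set.Iic (-(δ/2)), f y :=
      setIntegral_mono_set hfi.integrableOn
        (Filter.Eventually.of_forall fun y => hf0 y)
        (HasSubset.Subset.eventuallyLE (Set.Iic_subset_Iic.2 hx))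
    have h2 : (∫ y in Set.Iic (-(δ/2)), f y) + (∫ y in Set.Ioi (-(δ/2)), f y) = 1 := by
      rw [intervalIntegral.integral_Iic_add_Ioi hfi.integrableOn hfi.integrableOn, hm0]
    have h3 : (∫ y in Set.Ioc (-(δ/2)) (δ/2), f y) ≤ ∫ y in Set.Ioi (-(δ/2)), f y :=
      setIntegral_mono_set hfi.integrableOn
        (Filter.Eventually.of_forall fun y => hf0 y)
        (HasSubset.Subset.eventuallyLE Set.Ioc_subset_Ioi_self)
    linarith [hmass]
  -- numeric identities
  have h2γ : (0:ℝ) < (2:ℝ) ^ γ := Real.rpow_pos_of_pos two_pos γ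
  have hδγ : (0:ℝ) < δ ^ γ := Real.rpow_pos_of_pos hδ γ
  have h2γ1 : (2:ℝ) ^ (γ + 1) = 2 ^ γ * 2 := by
    rw [Real.rpow_add two_pos, Real.rpow_one]
  have hhalf : (δ/2) ^ γ = δ ^ γ / 2 ^ γ := Real.div_rpow hδ.le (by norm_num : (0:ℝ) ≤ 2) γ
  have hε2 : ε ^ 2 = 2 ^ ((2:ℝ) - γ) * δ ^ (1 + γ) := by
    rw [hδdef, Real.mul_rpow (Real.rpow_nonneg (by norm_num) _)
      (Real.rpow_nonneg hε.le _), ← Real.rpow_natCast ε 2,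
      ← Real.rpow_mul (by norm_num : (0:ℝ) ≤ 2), ← Real.rpow_mul hε.le]
    rw [div_mul_cancel₀ _ h1γ.ne', div_mul_cancel₀ _ h1γ.ne',
      Real.rpow_natCast, ← mul_assoc, ← Real.rpow_add two_pos]
    norm_num
  have hδ1γ : δ ^ ((1:ℝ) + γ) = δ * δ ^ γ := by
    rw [Real.rpow_add hδ, Real.rpow_one]
  have hεδ : ε ^ 2 * (3 / (4 * δ)) = 3 * δ ^ γ / 2 ^ γ := by
    rw [hε2, hδ1γ]
    have h4 : (2:ℝ) ^ ((2:ℝ) - γ) = 4 / 2 ^ γ := by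
      rw [Real.rpow_sub two_pos]
      norm_num
    rw [h4]
    field_simp
  -- the final inequality
  intro x
  rw [hder2 x, hder1' x]
  rcases le_or_gt |x| (δ/2) with hcase | hcase
  · -- central region
    have hxδ : |x / δ| ≤ 1/2 := by
      rw [abs_div, abs_of_pos hδ, div_le_iff₀ hδ]
      nlinarith
    have hfx : 3/(4*δ) ≤ f x := by
      have h3 := hρ34 (x/δ) (Set.mem_Icc.2 (abs_le.1 hxδ))
      have : (3/4 : ℝ) / δ ≤ ρ (x / δ) / δ := by gcongr
      calc (3/(4*δ) : ℝ) = (3/4) / δ := by ring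
        _ ≤ ρ (x / δ) / δ := this
    have habs : |x| ^ γ ≤ (δ/2) ^ γ :=
      Real.rpow_le_rpow (abs_nonneg x) hcase hγ0.le
    have hrnn : (0:ℝ) ≤ |x| ^ γ := Real.rpow_nonneg (abs_nonneg x) γ
    have hsgn : |sgn x| ≤ 1 := by
      unfold sgn
      split_ifs <;> norm_num
    have hGb : |2 * G x - 1| ≤ 1 :=
      abs_le.2 ⟨by linarith [hG0 x], by linarith [hG1 x]⟩
    have ht1 : -(δ/2) ^ γ ≤ sgn x * |x| ^ γ * (2 * G x - 1) := by
      have hub : |sgn x * |x| ^ γ * (2 * G x - 1)| ≤ (δ/2) ^ γ := by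
        rw [abs_mul, abs_mul, abs_of_nonneg hrnn]
        calc |sgn x| * |x| ^ γ * |2 * G x - 1|
            ≤ 1 * ((δ/2) ^ γ) * 1 := by
              apply mul_le_mul (mul_le_mul hsgn habs hrnn zero_le_one) hGb
                (abs_nonneg _)
              positivity
          _ = (δ/2) ^ γ := by ring
      linarith [(abs_le.1 hub).1]
    have ht2 : ε ^ 2 * (3/(4*δ)) ≤ ε ^ 2 / 2 * (2 * f x) := by
      have : ε ^ 2 / 2 * (2 * f x) = ε ^ 2 * f x := by ring
      rw [this]
      exact mul_le_mul_of_nonneg_left hfx (by positivity)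
    have hA : ε ^ 2 * (3/(4*δ)) = 3 * (δ ^ γ / 2 ^ γ) := by rw [hεδ]; ring
    have hB : δ ^ γ / 2 ^ (γ + 1) = (δ ^ γ / 2 ^ γ) / 2 := by rw [h2γ1]; ring
    have hP : (0:ℝ) < δ ^ γ / 2 ^ γ := by positivity
    have hfin : δ ^ γ / 2 ^ (γ + 1) ≤ -(δ/2) ^ γ + ε ^ 2 * (3/(4*δ)) := by
      rw [hA, hB, hhalf]
      linarith
    linarith
  · -- outer region
    have hδ2 : (0:ℝ) < δ/2 := by positivity
    have hterm2 : 0 ≤ ε ^ 2 / 2 * (2 * f x) :=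
      mul_nonneg (by positivity) (by linarith [hf0 x])
    have hrnn : (0:ℝ) ≤ |x| ^ γ := Real.rpow_nonneg (abs_nonneg x) γ
    have h1 : δ ^ γ / 2 ^ (γ + 1) = (δ/2) ^ γ * (1/2) := by
      rw [hhalf, h2γ1]
      ring
    rcases lt_abs.1 hcase with hx | hx
    · -- δ/2 < x
      have hxpos : 0 < x := lt_trans hδ2 hx
      have hsgn : sgn x = 1 := if_pos hxpos
      have hGx : (3/4 : ℝ) ≤ G x := hGhigh x hx.le
      have habs : (δ/2) ^ γ ≤ |x| ^ γ :=
        Real.rpow_le_rpow hδ2.le (by rw [abs_of_pos hxpos]; linarith) hγ0.le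
      have h2 : (δ/2) ^ γ * (1/2) ≤ |x| ^ γ * (2 * G x - 1) :=
        mul_le_mul habs (by linarith) (by norm_num) hrnn
      have h3 : sgn x * |x| ^ γ * (2 * G x - 1) = |x| ^ γ * (2 * G x - 1) := by
        rw [hsgn]
        ring
      linarith
    · -- δ/2 < -x
      have hxneg : x < 0 := by linarith
      have hsgn : sgn x = -1 := by
        unfold sgn
        rw [if_neg (by linarith), if_pos hxneg]
      have hGx : G x ≤ 1/4 := hGlow x (by linarith)
      have habs : (δ/2) ^ γ ≤ |x| ^ γ :=
        Real.rpow_le_rpow hδ2.le (by rw [abs_of_neg hxneg]; linarith) hγ0.le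
      have h2 : (δ/2) ^ γ * (1/2) ≤ |x| ^ γ * (1 - 2 * G x) :=
        mul_le_mul habs (by linarith) (by norm_num) hrnn
      have h3 : sgn x * |x| ^ γ * (2 * G x - 1) = |x| ^ γ * (1 - 2 * G x) := by
        rw [hsgn]
        ring
      linarith
end

section
/- Let T > 0, h > 0 and t̄ = 2h with t̄ ≤ T. Let x : [0, T] → ℝ be continuous with sup_{0 ≤ t ≤ T} | |x(t)| − t | ≤ h. Then |x(t)| ≥ h > 0 for all t ∈ [t̄, T], and either |x(t) − t| ≤ h for all t ∈ [t̄, T], or |x(t) + t| ≤ h for all t ∈ [t̄, T]. -/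
/-- Let `T > 0`, `h > 0`, `t̄ = 2h ≤ T` and let `x` be continuous on `[0,T]` with
`sup_{0 ≤ t ≤ T} ||x(t)| - t| ≤ h`. Then `|x(t)| ≥ h > 0` for `t ∈ [t̄, T]`, and either
`|x(t) - t| ≤ h` for all `t ∈ [t̄, T]`, or `|x(t) + t| ≤ h` for all `t ∈ [t̄, T]`. -/
theorem stmt12 (T h : ℝ) (hT : 0 < T) (hh : 0 < h) (htbar : 2 * h ≤ T)
    (x : ℝ → ℝ) (hxc : ContinuousOn x (Set.Icc 0 T))
    (hsup : ∀ t ∈ Set.Icc (0 : ℝ) T, abs (|x t| - t) ≤ h) :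
    (∀ t ∈ Set.Icc (2 * h) T, h ≤ |x t|) ∧
    ((∀ t ∈ Set.Icc (2 * h) T, |x t - t| ≤ h) ∨
     (∀ t ∈ Set.Icc (2 * h) T, |x t + t| ≤ h)) := by
  have h1 : ∀ t ∈ Set.Icc (2 * h) T, h ≤ |x t| := by
    intro t ht
    have ht0 : (0:ℝ) ≤ t := le_trans (by linarith) ht.1
    have := abs_le.mp (hsup t ⟨ht0, ht.2⟩)
    have := ht.1
    linarith [this, ht.1]
  refine ⟨h1, ?_⟩
  -- sign constancy via IVT
  have hmem : (2*h) ∈ Set.Icc (0:ℝ) T := ⟨by linarith, htbar⟩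
  have hsign : ∀ t ∈ Set.Icc (2*h) T, (0 < x (2*h) → 0 < x t) ∧ (x (2*h) < 0 → x t < 0) := by
    intro t ht
    have ht0 : (0:ℝ) ≤ t := le_trans (by linarith) ht.1
    have hsub : Set.Icc (2*h) t ⊆ Set.Icc 0 T := fun c hc =>
      ⟨le_trans (by linarith) hc.1, le_trans hc.2 ht.2⟩
    have hcont : ContinuousOn x (Set.Icc (2*h) t) := hxc.mono hsub
    have hnz : ∀ c ∈ Set.Icc (2*h) t, x c ≠ 0 := by
      intro c hc hc0
      have := h1 c ⟨hc.1, le_trans hc.2 ht.2⟩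
      rw [hc0] at this; simp at this; linarith
    constructor
    · intro hpos
      by_contra hle
      push_neg at hle
      have hneg : x t < 0 := lt_of_le_of_ne hle (hnz t ⟨ht.1, le_refl t⟩)
      obtain ⟨c, hc, hc0⟩ := intermediate_value_Icc' ht.1 hcont
        (Set.mem_Icc.mpr ⟨le_of_lt hneg, le_of_lt hpos⟩)
      exact hnz c hc hc0
    · intro hneg
      by_contra hle
      push_neg at hle
      have hpos : 0 < x t := lt_of_le_of_ne hle (Ne.symm (hnz t ⟨ht.1, le_refl t⟩))
      obtain ⟨c, hc, hc0⟩ := intermediate_value_Icc ht.1 hcont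
        (Set.mem_Icc.mpr ⟨le_of_lt hneg, le_of_lt hpos⟩)
      exact hnz c hc hc0
  have h2h : x (2*h) ≠ 0 := by
    intro h0
    have := h1 (2*h) ⟨le_refl _, htbar⟩
    rw [h0] at this; simp at this; linarith
  rcases h2h.lt_or_gt with hneg | hpos
  · right
    intro t ht
    have hxt : x t < 0 := (hsign t ht).2 hneg
    have ht0 : (0:ℝ) ≤ t := le_trans (by linarith) ht.1
    have := hsup t ⟨ht0, ht.2⟩
    rw [abs_of_neg hxt] at this
    rw [show x t + t = -(-x t - t) by ring, abs_neg]
    exact this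
  · left
    intro t ht
    have hxt : 0 < x t := (hsign t ht).1 hpos
    have ht0 : (0:ℝ) ≤ t := le_trans (by linarith) ht.1
    have := hsup t ⟨ht0, ht.2⟩
    rwa [abs_of_pos hxt] at this
end

section
/- Let γ ∈ [0,1) and T > 0. Let (μ_n) be a sequence of Borel probability measures on the space C([0,T], ℝ) of continuous functions with the supremum metric, converging weakly to a Borel probability measure μ. Suppose that for every t ∈ (0, T] and every η > 0, lim_{n→∞} μ_n({ω ∈ C([0,T], ℝ) : | |ω(t)| − H_γ(t) | > η}) = 0. Then μ({H_γ|_{[0,T]}, −H_γ|_{[0,T]}}) = 1, i.e. μ is concentrated on the two trajectories ±H_γ. -/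
open MeasureTheory

lemma Hgamma_continuous (γ : ℝ) (hγ : γ < 1) : Continuous (Hgamma γ) := by
  have hpos : (0:ℝ) < 1 - γ := by linarith
  have he : (0:ℝ) ≤ 1 / (1 - γ) := by
    have : (0:ℝ) < 1 - γ := by linarith
    positivity
  have hbase : Continuous (fun s : ℝ => (1 - γ) * max s 0) :=
    continuous_const.mul (continuous_id.max continuous_const)
  rw [continuous_iff_continuousAt]
  intro s
  exact (Real.continuousAt_rpow_const _ _ (Or.inr he)).comp hbase.continuousAt

lemma Hgamma_pos (γ : ℝ) (hγ : γ < 1) {s : ℝ} (hs : 0 < s) : 0 < Hgamma γ s := by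
  have : (0:ℝ) < (1 - γ) * max s 0 := by
    rw [max_eq_left hs.le]; nlinarith
  exact Real.rpow_pos_of_pos this _

lemma Hgamma_zero (γ : ℝ) (hγ : γ < 1) : Hgamma γ 0 = 0 := by
  have : (1 - γ) * max (0:ℝ) 0 = 0 := by simp
  have h1 : (0:ℝ) < 1 - γ := by linarith
  rw [Hgamma, this, Real.zero_rpow (one_div_pos.mpr h1).ne']

/-- Pointwise lemma: if `|ω q| = Hgamma γ q` for all rationals `q ∈ (0,T]`, then
`ω = Hgamma` or `ω = -Hgamma`. -/
lemma pointwise_lemma (γ T : ℝ) (hγ : γ < 1) (hT : 0 < T)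
    (ω : C(Set.Icc (0 : ℝ) T, ℝ))
    (h : ∀ q : ℚ, ∀ hq : (q : ℝ) ∈ Set.Ioc (0:ℝ) T,
      |ω ⟨q, hq.1.le, hq.2⟩| = Hgamma γ q) :
    (∀ t : Set.Icc (0 : ℝ) T, ω t = Hgamma γ t) ∨
      (∀ t : Set.Icc (0 : ℝ) T, ω t = -Hgamma γ t) := by
  set g : ℝ → ℝ := Set.IccExtend hT.le ω with hg
  have hgc : Continuous g := ω.continuous.comp continuous_projIcc
  have hgmem : ∀ t : ℝ, ∀ ht : t ∈ Set.Icc (0:ℝ) T, g t = ω ⟨t, ht⟩ := by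
    intro t ht
    simp [hg, Set.IccExtend_of_mem hT.le _ ht]
  -- |g t| = Hgamma γ t on all of [0,T]
  have habs : ∀ t ∈ Set.Icc (0:ℝ) T, |g t| = Hgamma γ t := by
    have hclosed : IsClosed {t : ℝ | |g t| = Hgamma γ t} :=
      isClosed_eq (hgc.abs) (Hgamma_continuous γ hγ)
    have hsub : (Set.Ioo (0:ℝ) T) ∩ Set.range ((↑) : ℚ → ℝ) ⊆ {t : ℝ | |g t| = Hgamma γ t} := by
      rintro t ⟨ht, q, rfl⟩
      have hq : (q:ℝ) ∈ Set.Ioc (0:ℝ) T := ⟨ht.1, ht.2.le⟩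
      have := h q hq
      rwa [← hgmem _ ⟨hq.1.le, hq.2⟩] at this
    have hdense : Set.Icc (0:ℝ) T ⊆ closure ((Set.Ioo (0:ℝ) T) ∩ Set.range ((↑) : ℚ → ℝ)) := by
      have : Set.Ioo (0:ℝ) T ⊆ closure ((Set.Ioo (0:ℝ) T) ∩ Set.range ((↑) : ℚ → ℝ)) :=
        Dense.open_subset_closure_inter Rat.denseRange_cast isOpen_Ioo
      calc Set.Icc (0:ℝ) T = closure (Set.Ioo (0:ℝ) T) := (closure_Ioo hT.ne).symm
        _ ⊆ closure (closure ((Set.Ioo (0:ℝ) T) ∩ Set.range ((↑) : ℚ → ℝ))) := closure_mono this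
        _ = _ := closure_closure
    intro t ht
    exact hclosed.closure_subset (closure_mono hsub (hdense ht))
  have hne : ∀ t : ℝ, 0 < t → t ≤ T → g t ≠ 0 := by
    intro t ht htT h0
    have := habs t ⟨ht.le, htT⟩
    rw [h0, abs_zero] at this
    exact absurd this.symm (Hgamma_pos γ hγ ht).ne'
  have hT0 : g T ≠ 0 := hne T hT le_rfl
  -- sign is constant on (0, T]
  have hsign : ∀ t : ℝ, 0 < t → t ≤ T → (0 < g T → 0 < g t) ∧ (g T < 0 → g t < 0) := by
    intro t ht htT
    constructor
    · intro hgT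
      by_contra hle
      push_neg at hle
      have hlt : g t < 0 := lt_of_le_of_ne hle (hne t ht htT)
      obtain ⟨u, hu, hgu⟩ := intermediate_value_Icc htT hgc.continuousOn
        (Set.mem_Icc.mpr ⟨hlt.le, hgT.le⟩ : (0:ℝ) ∈ Set.Icc (g t) (g T))
      exact hne u (lt_of_lt_of_le ht hu.1) hu.2 hgu
    · intro hgT
      by_contra hle
      push_neg at hle
      have hlt : 0 < g t := lt_of_le_of_ne hle (Ne.symm (hne t ht htT))
      obtain ⟨u, hu, hgu⟩ := intermediate_value_Icc' htT hgc.continuousOn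
        (Set.mem_Icc.mpr ⟨hgT.le, hlt.le⟩ : (0:ℝ) ∈ Set.Icc (g T) (g t))
      exact hne u (lt_of_lt_of_le ht hu.1) hu.2 hgu
  rcases hT0.lt_or_gt with hneg | hpos
  · right
    rintro ⟨t, ht0, htT⟩
    rcases eq_or_lt_of_le ht0 with rfl | ht0'
    · have := habs 0 ⟨le_rfl, hT.le⟩
      rw [Hgamma_zero γ hγ] at this
      have h0 : g 0 = 0 := abs_eq_zero.mp this
      rw [← hgmem 0 ⟨le_rfl, hT.le⟩, h0, Hgamma_zero γ hγ, neg_zero]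
    · have hlt := (hsign t ht0' htT).2 hneg
      have := habs t ⟨ht0, htT⟩
      rw [abs_of_neg hlt] at this
      rw [← hgmem t ⟨ht0, htT⟩]
      linarith
  · left
    rintro ⟨t, ht0, htT⟩
    rcases eq_or_lt_of_le ht0 with rfl | ht0'
    · have := habs 0 ⟨le_rfl, hT.le⟩
      rw [Hgamma_zero γ hγ] at this
      have h0 : g 0 = 0 := abs_eq_zero.mp this
      rw [← hgmem 0 ⟨le_rfl, hT.le⟩, h0, Hgamma_zero γ hγ]
    · have hlt := (hsign t ht0' htT).1 hpos
      have := habs t ⟨ht0, htT⟩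
      rw [abs_of_pos hlt] at this
      rw [← hgmem t ⟨ht0, htT⟩, this]

/-- If Borel probability measures `μ_n` on `C([0,T], ℝ)` converge weakly to `μ` and for all
`t ∈ (0,T]`, `η > 0` one has `μ_n {ω : ||ω(t)| - H_γ(t)| > η} → 0`, then `μ` is concentrated
on the two trajectories `±H_γ`. -/
theorem stmt13 (γ : ℝ) (hγ : γ ∈ Set.Ico (0 : ℝ) 1) (T : ℝ) (hT : 0 < T)
    [MeasurableSpace C(Set.Icc (0 : ℝ) T, ℝ)] [BorelSpace C(Set.Icc (0 : ℝ) T, ℝ)]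
    (μn : ℕ → Measure C(Set.Icc (0 : ℝ) T, ℝ)) (μ : Measure C(Set.Icc (0 : ℝ) T, ℝ))
    [∀ n, IsProbabilityMeasure (μn n)] [IsProbabilityMeasure μ]
    (hweak : ∀ f : BoundedContinuousFunction C(Set.Icc (0 : ℝ) T, ℝ) ℝ,
      Filter.Tendsto (fun n => ∫ ω, f ω ∂(μn n)) Filter.atTop (nhds (∫ ω, f ω ∂μ)))
    (hconc : ∀ t : ℝ, ∀ ht : t ∈ Set.Ioc (0 : ℝ) T, ∀ η : ℝ, 0 < η →
      Filter.Tendsto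
        (fun n => μn n {ω | η < abs (|ω ⟨t, ht.1.le, ht.2⟩| - Hgamma γ t)})
        Filter.atTop (nhds 0)) :
    μ {ω | (∀ t : Set.Icc (0 : ℝ) T, ω t = Hgamma γ t) ∨
           (∀ t : Set.Icc (0 : ℝ) T, ω t = -Hgamma γ t)} = 1 := by
  classical
  -- convergence of probability measures
  let P : ℕ → ProbabilityMeasure C(Set.Icc (0 : ℝ) T, ℝ) := fun n => ⟨μn n, inferInstance⟩
  let Pμ : ProbabilityMeasure C(Set.Icc (0 : ℝ) T, ℝ) := ⟨μ, inferInstance⟩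
  have hPtend : Filter.Tendsto P Filter.atTop (nhds Pμ) :=
    ProbabilityMeasure.tendsto_iff_forall_integral_tendsto.mpr hweak
  -- each open bad set is null
  have hnull : ∀ t : ℝ, ∀ ht : t ∈ Set.Ioc (0 : ℝ) T, ∀ η : ℝ, 0 < η →
      μ {ω : C(Set.Icc (0 : ℝ) T, ℝ) | η < |(|ω ⟨t, ht.1.le, ht.2⟩| - Hgamma γ t)|} = 0 := by
    intro t ht η hη
    set G : Set C(Set.Icc (0 : ℝ) T, ℝ) := {ω : C(Set.Icc (0 : ℝ) T, ℝ) | η < |(|ω ⟨t, ht.1.le, ht.2⟩| - Hgamma γ t)|} with hGdef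
    have hGopen : IsOpen G := by
      have hcont : Continuous (fun ω : C(Set.Icc (0 : ℝ) T, ℝ) => |(|ω ⟨t, ht.1.le, ht.2⟩| - Hgamma γ t)|) :=
        ((ContinuousEvalConst.continuous_eval_const _).abs.sub continuous_const).abs
      exact isOpen_lt continuous_const hcont
    have h1 : (Pμ : Measure C(Set.Icc (0 : ℝ) T, ℝ)) G ≤ Filter.atTop.liminf fun n => (P n : Measure C(Set.Icc (0 : ℝ) T, ℝ)) G :=
      ProbabilityMeasure.le_liminf_measure_open_of_tendsto hPtend hGopen
    have h2 : Filter.Tendsto (fun n => (P n : Measure C(Set.Icc (0 : ℝ) T, ℝ)) G) Filter.atTop (nhds 0) :=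
      hconc t ht η hη
    have h3 : Filter.atTop.liminf (fun n => (P n : Measure C(Set.Icc (0 : ℝ) T, ℝ)) G) = 0 := h2.liminf_eq
    rw [h3] at h1
    exact le_antisymm h1 (zero_le)
  -- the countable bad set
  let Q : Set ℚ := {q : ℚ | (q : ℝ) ∈ Set.Ioc (0:ℝ) T}
  let R : Set ℚ := {r : ℚ | (0:ℝ) < (r:ℝ)}
  let N : Set C(Set.Icc (0 : ℝ) T, ℝ) := ⋃ (q : Q) (r : R),
    {ω : C(Set.Icc (0 : ℝ) T, ℝ) | (r:ℝ) < |(|ω ⟨(q:ℚ), q.2.1.le, q.2.2⟩| - Hgamma γ (q:ℚ))|}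
  have hNnull : μ N = 0 := by
    refine measure_iUnion_null fun q => measure_iUnion_null fun r => ?_
    exact hnull q q.2 r r.2
  -- good ω satisfy the conclusion
  have hgood : Nᶜ ⊆ {ω : C(Set.Icc (0 : ℝ) T, ℝ) | (∀ t : Set.Icc (0 : ℝ) T, ω t = Hgamma γ t) ∨
           (∀ t : Set.Icc (0 : ℝ) T, ω t = -Hgamma γ t)} := by
    intro ω hω
    simp only [N, Set.compl_iUnion, Set.mem_iInter, Set.mem_compl_iff, Set.mem_setOf_eq,
      not_lt] at hω
    refine pointwise_lemma γ T hγ.2 hT ω ?_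
    intro q hq
    have hle : ∀ r : ℚ, (0:ℝ) < (r:ℝ) → |(|ω ⟨(q:ℝ), hq.1.le, hq.2⟩| - Hgamma γ q)| ≤ r :=
      fun r hr => hω ⟨q, hq⟩ ⟨r, hr⟩
    have h0 : |(|ω ⟨(q:ℝ), hq.1.le, hq.2⟩| - Hgamma γ q)| ≤ 0 := by
      by_contra hc
      push_neg at hc
      obtain ⟨r, hr0, hrlt⟩ := exists_rat_btwn hc
      exact absurd (hle r (by exact_mod_cast hr0)) (not_le.mpr hrlt)
    have := le_antisymm h0 (abs_nonneg _)
    have := abs_eq_zero.mp this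
    linarith [abs_nonneg (ω ⟨(q:ℝ), hq.1.le, hq.2⟩), this]
  -- conclude
  have h1 : (1:ENNReal) ≤ μ Nᶜ := by
    have : μ Set.univ ≤ μ N + μ Nᶜ := by
      rw [← Set.union_compl_self N]
      exact measure_union_le _ _
    rw [measure_univ, hNnull, zero_add] at this
    exact this
  refine le_antisymm prob_le_one (le_trans h1 (measure_mono hgood))
end
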